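/- arXiv:2002.03965 — 4 statements merged into one kernel-verified Lean document; each statement's English description precedes it below -/
import Mathlib

section
/- For any palindrome w and any p with 1 ≤ p ≤ |w|: p is a period of w if and only if the prefix w[0..|w|-p-1] obtained by deleting the last p letters of w is a palindrome. -/
/-- `p` is a period of `w`: letters at distance `p` agree. -/
def HasPeriod {α : Type*} (w : List α) (p : ℕ) : Prop :=
  ∀ i : ℕ, i + p < w.length → w[i]? = w[i + p]?

/-- The minimal period of `w`. -/
noncomputable def minPeriod {α : Type*} (w : List α) : ℕ :=
  sInf {p : ℕ | 0 < p ∧ HasPeriod w p}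

/-- `k`-th power of a list: `k` concatenated copies of `w`. -/
def listPow {α : Type*} (w : List α) (k : ℕ) : List α := (List.replicate k w).flatten

/-- `s` admits a factorization into exactly `k` nonempty palindromes. -/
def HasPalFact {α : Type*} (s : List α) (k : ℕ) : Prop :=
  ∃ L : List (List α), L.length = k ∧ L.flatten = s ∧ ∀ w ∈ L, w ≠ [] ∧ w.reverse = w

/-- Palindromic length: minimum number of nonempty palindromic factors (`pl ε = 0`). -/
noncomputable def pl {α : Type*} (s : List α) : ℕ := sInf {k : ℕ | HasPalFact s k}

/-- `plParity j s` : minimum `k ≡ j (mod 2)` with a palindromic `k`-factorization, `⊤` if none. -/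
noncomputable def plParity {α : Type*} (j : ℕ) (s : List α) : ℕ∞ :=
  sInf {n : ℕ∞ | ∃ k : ℕ, n = (k : ℕ∞) ∧ k % 2 = j ∧ HasPalFact s k}

/-- The set of nonempty palindromic suffixes of `s` with minimal period exactly `p`
(the `p`-series of `s`). -/
def pSeries {α : Type*} (s : List α) (p : ℕ) : Set (List α) :=
  {w | w <:+ s ∧ w ≠ [] ∧ w.reverse = w ∧ minPeriod w = p}

theorem hasPeriod_iff_drop_prefix {α : Type*} (w : List α) (p : ℕ) :
    HasPeriod w p ↔ w.drop p <+: w := by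
  simp only [HasPeriod, List.prefix_iff_getElem?, List.length_drop, List.getElem_drop,
    ← List.getElem?_eq_getElem, Nat.add_comm p]
  exact forall_congr' fun i => ⟨fun h hi => h (by omega), fun h hi => h (by omega)⟩

theorem palindrome_period_iff_prefix_palindrome_general {α : Type*} (w : List α) (p : ℕ)
    (hw : w.reverse = w) :
    HasPeriod w p ↔ (w.take (w.length - p)).reverse = w.take (w.length - p) := by
  -- in a palindrome, the reversal of the prefix of length `|w| - p` is the suffix `w.drop p`
  rw [hasPeriod_iff_drop_prefix, ← List.drop_reverse, hw, List.prefix_iff_eq_take,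
    List.length_drop]

/-- for a palindrome `w` and `1 ≤ p ≤ |w|`, `p` is a period of `w` iff
the prefix of `w` obtained by deleting the last `p` letters is a palindrome. -/
theorem palindrome_period_iff_prefix_palindrome {α : Type*} (w : List α) (p : ℕ)
    (hw : w.reverse = w) (hp1 : 1 ≤ p) (hp2 : p ≤ w.length) :
    HasPeriod w p ↔ (w.take (w.length - p)).reverse = w.take (w.length - p) :=
  palindrome_period_iff_prefix_palindrome_general w p hw
end

section
/- If w is a palindrome and w = (u·v)^k·u where k ≥ 1, u and v are palindromes, and |u·v| is the minimal period of w, then the center of any subpalindrome x of w with |x| ≥ |u·v| - 1 coincides with the center of one of the occurrences of u or v in the decomposition (u·v)^k·u. -/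
/-!
Write `p` for the minimal period of `w` and read the letters of `w` as a function `f` of the
position modulo `p`. Since `w` is a palindrome, `f` is symmetric about the residue `D` of the
(doubled) center of `w`; since the subpalindrome covers at least `p - 1` consecutive positions,
`f` is symmetric about the residue `C` of its center at all residues but one. Composing the two
reflections, `f` is invariant under the translation by `D - C` away from one point, hence
everywhere, so `(D - C).val` is a period of `w` smaller than `p` unless `C = D`. Finally, the
positions congruent to `D` modulo `p` are exactly the centers of the occurrences of `u` and `v`.
-/

theorem Function.periodic_of_forall_ne {G β : Type*} [AddLeftCancelMonoid G] {f : G → β}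
    {e r : G} (he : IsOfFinAddOrder e) (h : ∀ s, s ≠ r → f (s + e) = f s) :
    Function.Periodic f e := by
  intro s
  by_cases hs : s = r
  swap
  · exact h s hs
  subst hs
  have orbit : ∀ m, m < addOrderOf e → f (s + (m + 1) • e) = f (s + e) := by
    intro m
    induction m with
    | zero => simp
    | succ m ih =>
      intro hm
      have hne : s + (m + 1) • e ≠ s := fun heq =>
        nsmul_ne_zero_of_lt_addOrderOf m.succ_ne_zero hm (by simpa using heq)
      rw [← ih (by omega), ← h _ hne, add_assoc s, ← succ_nsmul]
  have hn := he.addOrderOf_pos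
  have := orbit (addOrderOf e - 1) (by omega)
  rwa [Nat.sub_add_cancel hn, addOrderOf_nsmul_eq_zero, add_zero, eq_comm] at this

section Words

variable {α : Type*} {w : List α} {p i j : ℕ}

theorem hasPeriod_length (w : List α) : HasPeriod w w.length :=
  fun _ h => absurd h (by omega)

theorem minPeriod_pos_and_hasPeriod (w : List α) :
    0 < minPeriod w ∧ HasPeriod w (minPeriod w) :=
  Nat.sInf_mem (s := {p | 0 < p ∧ HasPeriod w p})
    ⟨w.length + 1, Nat.succ_pos _, fun _ h => absurd h (by omega)⟩

theorem minPeriod_le {q : ℕ} (hq : 0 < q) (h : HasPeriod w q) : minPeriod w ≤ q :=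
  Nat.sInf_le ⟨hq, h⟩

theorem minPeriod_le_length (hw : w ≠ []) : minPeriod w ≤ w.length :=
  minPeriod_le (List.length_pos_iff.mpr hw) (hasPeriod_length w)

theorem HasPeriod.getElem?_mod (h : HasPeriod w p) {a : ℕ} (ha : a < w.length) :
    w[a]? = w[a % p]? := by
  induction a using Nat.strong_induction_on with
  | _ a ih =>
    rcases lt_or_ge a p with hap | hpa
    · rw [Nat.mod_eq_of_lt hap]
    obtain rfl | hp := Nat.eq_zero_or_pos p
    · rw [Nat.mod_zero]
    have hstep := h (a - p) (by omega)
    rw [Nat.sub_add_cancel hpa] at hstep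
    rw [← hstep, ih (a - p) (by omega) (by omega), ← Nat.mod_eq_sub_mod hpa]

def letterMod (w : List α) (p : ℕ) (r : ZMod p) : Option α := w[r.val]?

theorem HasPeriod.getElem?_eq_letterMod (h : HasPeriod w p) {a : ℕ} (ha : a < w.length) :
    w[a]? = letterMod w p a := by
  rw [letterMod, ZMod.val_natCast, h.getElem?_mod ha]

theorem hasPeriod_val_of_periodic_letterMod [NeZero p] (h : HasPeriod w p) {e : ZMod p}
    (he : Function.Periodic (letterMod w p) e) : HasPeriod w e.val := by
  intro a ha
  rw [h.getElem?_eq_letterMod (by omega), h.getElem?_eq_letterMod ha, Nat.cast_add,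
    ZMod.natCast_zmod_val, he]

theorem getElem?_add_sub_eq_of_reverse_drop_take
    (hx : ((w.drop i).take (j - i + 1)).reverse = (w.drop i).take (j - i + 1))
    (hj : j < w.length) {a : ℕ} (hia : i ≤ a) (haj : a ≤ j) :
    w[i + j - a]? = w[a]? := by
  set x := (w.drop i).take (j - i + 1)
  have hxlen : x.length = j - i + 1 := by simp only [x, List.length_take, List.length_drop]; omega
  have hxw : ∀ t, t ≤ j - i → x[t]? = w[i + t]? := fun t ht => by
    rw [List.getElem?_take, if_pos (by omega), List.getElem?_drop]
  calc w[i + j - a]? = x[j - a]? := by rw [hxw _ (by omega)]; congr 1; omega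
    _ = x.reverse[a - i]? := by rw [List.getElem?_reverse (by omega), hxlen]; congr 1; omega
    _ = w[a]? := by rw [hx, hxw _ (by omega)]; congr 1; omega

/-- `(s - i).val ≤ j - i` says that the residue `s` is represented in the window `i, …, j`. -/
theorem HasPeriod.letterMod_sub_eq [NeZero p] (h : HasPeriod w p) (hij : i ≤ j)
    (hj : j < w.length)
    (hrefl : ∀ a, i ≤ a → a ≤ j → w[i + j - a]? = w[a]?) {s : ZMod p}
    (hs : (s - i).val ≤ j - i) :
    letterMod w p ((i + j : ℕ) - s) = letterMod w p s := by
  set a := i + (s - i).val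
  have has : (a : ZMod p) = s := by simp [a]
  have hcast : ((i + j - a : ℕ) : ZMod p) = (i + j : ℕ) - s := by
    rw [Nat.cast_sub (by omega), has]
  rw [← hcast, ← has, ← h.getElem?_eq_letterMod (by omega),
    ← h.getElem?_eq_letterMod (by omega), hrefl a (by omega) (by omega)]

theorem subpalindrome_center_modEq (hw : w.reverse = w) (hij : i ≤ j) (hj : j < w.length)
    (hx : ((w.drop i).take (j - i + 1)).reverse = (w.drop i).take (j - i + 1))
    (hlen : minPeriod w - 1 ≤ j - i + 1) :
    i + j ≡ w.length - 1 [MOD minPeriod w] := by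
  obtain ⟨hp, hper⟩ := minPeriod_pos_and_hasPeriod w
  set p := minPeriod w
  have : NeZero p := ⟨hp.ne'⟩
  have hpN : p ≤ w.length := minPeriod_le_length (List.ne_nil_of_length_pos (by omega))
  set f := letterMod w p
  set C : ZMod p := ((i + j : ℕ) : ZMod p)
  set D : ZMod p := ((w.length - 1 : ℕ) : ZMod p)
  have hwx : ((w.drop 0).take (w.length - 1 - 0 + 1)).reverse =
      (w.drop 0).take (w.length - 1 - 0 + 1) := by
    rwa [List.drop_zero, Nat.sub_zero, Nat.sub_add_cancel (by omega), List.take_length]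
  have reflD : ∀ s, f (D - s) = f s := fun s => by
    simpa only [Nat.zero_add] using hper.letterMod_sub_eq (Nat.zero_le _) (by omega)
      (fun a => getElem?_add_sub_eq_of_reverse_drop_take hwx (by omega))
      (by have := ZMod.val_lt (s - ((0 : ℕ) : ZMod p)); omega)
  -- every residue except `i - 1` is represented in the window of length `≥ p - 1` from `i`
  have reflC : ∀ s, s ≠ (i : ZMod p) - 1 → f (C - s) = f s := by
    intro s hs
    refine hper.letterMod_sub_eq hij hj (fun a => getElem?_add_sub_eq_of_reverse_drop_take hx hj) ?_
    have hlt := ZMod.val_lt (s - (i : ZMod p))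
    suffices (s - (i : ZMod p)).val ≠ p - 1 by omega
    intro hval
    apply hs
    rw [← sub_add_cancel s i, ← ZMod.natCast_zmod_val (s - (i : ZMod p)), hval,
      Nat.cast_sub (by omega), ZMod.natCast_self]
    ring
  have periodic : Function.Periodic f (D - C) := by
    refine Function.periodic_of_forall_ne (r := (i : ZMod p) - 1) (isOfFinAddOrder_of_finite _)
      fun s hs => ?_
    rw [← reflD, ← reflC s hs]
    congr 1
    ring
  have hCD : C = D := by
    by_contra hne
    have hval : (D - C).val ≠ 0 := by rw [Ne, ZMod.val_eq_zero, sub_eq_zero]; exact Ne.symm hne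
    have := minPeriod_le (Nat.pos_of_ne_zero hval)
      (hasPeriod_val_of_periodic_letterMod hper periodic)
    have := ZMod.val_lt (D - C)
    omega
  exact (ZMod.natCast_eq_natCast_iff _ _ _).mp hCD

end Words

theorem exists_center_of_modEq {a b k c : ℕ} (hc : c + 2 ≤ 2 * (k * (a + b) + a))
    (hmod : c + 1 ≡ k * (a + b) + a [MOD a + b]) :
    ∃ m : ℕ,
      (m ≤ k ∧ (c : ℤ) = 2 * (m * (a + b)) + a - 1) ∨
      (m < k ∧ (c : ℤ) = 2 * (m * (a + b) + a) + b - 1) := by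
  obtain ⟨d, hd⟩ := hmod.dvd
  push_cast at hd
  have hcq : (c : ℤ) + 1 = (k - d) * (a + b) + a := by linear_combination -hd
  have hc' : (c : ℤ) + 2 ≤ 2 * (k * (a + b) + a) := by exact_mod_cast hc
  obtain ⟨m, hm | hm⟩ := Int.even_or_odd' ((k : ℤ) - d)
  · have hm0 : 0 ≤ m := by nlinarith
    have hmk : m ≤ k := by nlinarith
    lift m to ℕ using hm0
    exact ⟨m, Or.inl ⟨by exact_mod_cast hmk, by rw [hm] at hcq; linear_combination hcq⟩⟩
  · have hm0 : 0 ≤ m := by nlinarith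
    have hmk : m < k := by nlinarith
    lift m to ℕ using hm0
    exact ⟨m, Or.inr ⟨by exact_mod_cast hmk, by rw [hm] at hcq; linear_combination hcq⟩⟩

theorem subpalindrome_center_in_periodic_palindrome_general {α : Type*} (u v w : List α) (k : ℕ)
    (hw : w.reverse = w)
    (hdecomp : w = listPow (u ++ v) k ++ u)
    (hmin : minPeriod w = (u ++ v).length)
    (i j : ℕ) (hij : i ≤ j) (hj : j < w.length)
    (hx : ((w.drop i).take (j - i + 1)).reverse = (w.drop i).take (j - i + 1))
    (hlen : (u ++ v).length - 1 ≤ j - i + 1) :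
    ∃ m : ℕ,
      (m ≤ k ∧ (i + j : ℤ) = 2 * (m * (u ++ v).length) + u.length - 1) ∨
      (m < k ∧ (i + j : ℤ) = 2 * (m * (u ++ v).length + u.length) + v.length - 1) := by
  have hN : w.length = k * (u.length + v.length) + u.length := by
    simp [hdecomp, listPow, List.length_flatten, List.sum_replicate]
  have hmod := subpalindrome_center_modEq hw hij hj hx (hmin ▸ hlen)
  have hmod' : i + j + 1 ≡ k * (u.length + v.length) + u.length [MOD u.length + v.length] := by
    rw [hmin, List.length_append] at hmod
    simpa only [← hN, Nat.sub_add_cancel (show 1 ≤ w.length by omega)] using hmod.add_right 1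
  have := exists_center_of_modEq (c := i + j) (by omega) hmod'
  simpa only [List.length_append, Nat.cast_add] using this

/-- if the palindrome `w = (uv)^k u` (`k ≥ 1`, `u`, `v` palindromes,
`|uv|` the minimal period of `w`), then every subpalindrome occurrence `w[i..j]` of length
`≥ |uv| - 1` has the same center (doubled center `i + j`) as one of the occurrences of `u`
(at positions `m·|uv|`, `0 ≤ m ≤ k`) or of `v` (at positions `m·|uv| + |u|`, `0 ≤ m < k`)
in the decomposition. -/
theorem subpalindrome_center_in_periodic_palindrome {α : Type*} (u v w : List α) (k : ℕ)
    (hk : 1 ≤ k) (hu : u.reverse = u) (hv : v.reverse = v) (hw : w.reverse = w)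
    (hdecomp : w = listPow (u ++ v) k ++ u)
    (hmin : minPeriod w = (u ++ v).length)
    (i j : ℕ) (hij : i ≤ j) (hj : j < w.length)
    (hx : ((w.drop i).take (j - i + 1)).reverse = (w.drop i).take (j - i + 1))
    (hlen : (u ++ v).length - 1 ≤ j - i + 1) :
    ∃ m : ℕ,
      (m ≤ k ∧ (i + j : ℤ) = 2 * (m * (u ++ v).length) + u.length - 1) ∨
      (m < k ∧ (i + j : ℤ) = 2 * (m * (u ++ v).length + u.length) + v.length - 1) :=
  subpalindrome_center_in_periodic_palindrome_general u v w k hw hdecomp hmin i j hij hj hx hlen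
end

section
/- Let w = (uv)^r u be a palindrome that is a suffix of s[0..n], where |uv| = p is the minimal period of w and r ≥ 1. Suppose s[0..n] also has a suffix-palindrome with minimal period q < p, and suppose period p survives for at least p more appended letters (i.e., s[0..n+p] has a suffix of length at least |w| + p with period p). Then period q survives for fewer than p more letters: otherwise s[n-q+1..n+p] of length p+q has periods p and q, hence by the Fine–Wilf theorem period gcd(p,q) < p, making uv a proper power and contradicting minimality of p. -/
/-!
The suffix of length `p + q` of `s ++ t` lies in both surviving periodic suffixes, so it has
periods `p` and `q`, hence period `g = gcd p q` by Fine–Wilf. A window of length `p + g` with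
period `g` inside a word with period `p` spreads period `g` over the whole word, so the
`p`-periodic suffix, and with it `w`, has period `g ≤ q < p`, contradicting `minPeriod w = p`.
-/

section Periods

variable {α : Type*}

lemma hasPeriod_of_length_le {w : List α} {p : ℕ} (h : w.length ≤ p) : HasPeriod w p :=
  fun _ hi => absurd hi (by omega)

lemma minPeriod_le_s11 {w : List α} {p : ℕ} (hp : 0 < p) (h : HasPeriod w p) : minPeriod w ≤ p :=
  Nat.sInf_le ⟨hp, h⟩

lemma minPeriod_pos (w : List α) : 0 < minPeriod w :=
  (Nat.sInf_mem (s := {p | 0 < p ∧ HasPeriod w p})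
    ⟨w.length + 1, by omega, hasPeriod_of_length_le (by omega)⟩).1

lemma minPeriod_le_max_length_one (w : List α) : minPeriod w ≤ max w.length 1 :=
  minPeriod_le_s11 (by omega) (hasPeriod_of_length_le (le_max_left _ _))

namespace HasPeriod

variable {x y : List α} {p q : ℕ}

lemma of_isInfix (h : HasPeriod y p) (hx : x <:+: y) : HasPeriod x p := by
  obtain ⟨k, hk, hget⟩ := List.infix_iff_getElem?.mp hx
  intro i hi
  rw [List.getElem?_eq_getElem (by omega), List.getElem?_eq_getElem hi, ← hget, ← hget,
    Nat.add_right_comm]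
  exact h (i + k) (by omega)

lemma getElem?_add_mul (h : HasPeriod y p) (k : ℕ) {i : ℕ} (hi : i + k * p < y.length) :
    y[i]? = y[i + k * p]? := by
  induction k with
  | zero => simp
  | succ k ih =>
    rw [Nat.succ_mul, ← Nat.add_assoc] at hi ⊢
    rw [ih (by omega), h _ hi]

lemma tsub (hqp : q ≤ p) (hlen : p + q ≤ x.length) (hp : HasPeriod x p) (hq : HasPeriod x q) :
    HasPeriod x (p - q) := by
  intro i hi
  rcases Nat.lt_or_ge (i + p) x.length with hip | hip
  · rw [hp i hip, hq (i + (p - q)) (by omega)]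
    congr 1; omega
  · have hiq : i - q + q = i := by omega
    rw [← hiq, ← hq (i - q) (by omega), hp (i - q) (by omega)]
    congr 1; omega

/-- Fine–Wilf, in the weak form with `p + q` instead of `p + q - gcd p q`. -/
theorem gcd (hp : HasPeriod x p) (hq : HasPeriod x q) (hlen : p + q ≤ x.length) :
    HasPeriod x (p.gcd q) := by
  induction hN : p + q using Nat.strong_induction_on generalizing p q with
  | _ N ih =>
    rcases Nat.eq_zero_or_pos q with rfl | hq0
    · simpa using hp
    rcases Nat.eq_zero_or_pos p with rfl | hp0
    · simpa using hq
    rcases le_total q p with hqp | hpq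
    · rw [← Nat.gcd_sub_self_left hqp]
      exact ih p (by omega) (hp.tsub hqp hlen hq) hq (by omega) (by omega)
    · rw [← Nat.gcd_sub_self_right hpq]
      exact ih q (by omega) hp (hq.tsub hpq (by omega) hp) (by omega) (by omega)

/-- Shift `i` by a multiple of `p` into the window `x`, use period `g` there, and shift back. -/
lemma of_suffix_hasPeriod {g : ℕ} (hp0 : 0 < p) (hp : HasPeriod y p) (hx : x <:+ y)
    (hg : HasPeriod x g) (hlen : p + g ≤ x.length) : HasPeriod y g := by
  obtain ⟨pre, rfl⟩ := hx
  have hwindow : ∀ j, (pre ++ x)[pre.length + j]? = x[j]? := fun j => by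
    rw [List.getElem?_append_right (by omega), Nat.add_sub_cancel_left]
  have hylen : (pre ++ x).length = pre.length + x.length := List.length_append
  intro i hi
  set k := (pre.length + x.length - g - 1 - i) / p
  have hk : p * k + (pre.length + x.length - g - 1 - i) % p = _ := Nat.div_add_mod _ p
  have hkp : p * k = k * p := Nat.mul_comm _ _
  have hmod := Nat.mod_lt (pre.length + x.length - g - 1 - i) hp0
  have hj : i + k * p = pre.length + (i + k * p - pre.length) := by omega
  rw [hp.getElem?_add_mul k (by omega), hp.getElem?_add_mul k (i := i + g) (by omega),
    Nat.add_right_comm, hj, Nat.add_assoc pre.length, hwindow, hwindow, hg _ (by omega)]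

end HasPeriod

end Periods

theorem smaller_period_dies_general {α : Type*} (s t w z : List α) (p q : ℕ)
    (hmin : minPeriod w = p) (hws : w <:+ s)
    (hzne : z ≠ []) (hq : minPeriod z = q)
    (hqp : q < p) (ht : t.length = p)
    (hsurv : ∃ y : List α, y <:+ s ++ t ∧ w.length + p ≤ y.length ∧ HasPeriod y p) :
    ¬ ∃ y : List α, y <:+ s ++ t ∧ z.length + p ≤ y.length ∧ HasPeriod y q := by
  rintro ⟨y₂, hy₂, hy₂len, hy₂q⟩
  obtain ⟨y₁, hy₁, hy₁len, hy₁p⟩ := hsurv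
  have hq0 : 0 < q := hq ▸ minPeriod_pos z
  have hqz : q ≤ z.length := by
    have := minPeriod_le_max_length_one z
    have := List.length_pos_iff.mpr hzne
    omega
  have hpw : p ≤ w.length := by have := minPeriod_le_max_length_one w; omega
  have hgq : p.gcd q ≤ q := Nat.le_of_dvd hq0 (Nat.gcd_dvd_right p q)
  set x := y₁.drop (y₁.length - (p + q))
  have hx₁ : x <:+ y₁ := List.drop_suffix _ _
  have hxlen : x.length = p + q := by simp only [x, List.length_drop]; omega
  have hx₂ : x <:+ y₂ :=
    List.suffix_of_suffix_length_le (hx₁.trans hy₁) hy₂ (by omega)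
  have hxg : HasPeriod x (p.gcd q) :=
    (hy₁p.of_isInfix hx₁.isInfix).gcd (hy₂q.of_isInfix hx₂.isInfix) (by omega)
  have hy₁g : HasPeriod y₁ (p.gcd q) :=
    hy₁p.of_suffix_hasPeriod (by omega) hx₁ hxg (by omega)
  have hwt : w ++ t <:+ y₁ :=
    List.suffix_of_suffix_length_le (List.suffix_append_self_iff.mpr hws) hy₁ (by rw [List.length_append]; omega)
  have hwg : HasPeriod w (p.gcd q) :=
    hy₁g.of_isInfix ((List.prefix_append w t).isInfix.trans hwt.isInfix)
  have := minPeriod_le_s11 (Nat.gcd_pos_of_pos_right p hq0) hwg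
  omega

/-- let `w = (uv)^r u` be a palindromic suffix of `s` with minimal period
`p = |uv|`, `r ≥ 1`, and let `z` be a suffix-palindrome of `s` with minimal period `q < p`.
If, after appending the `p` letters `t`, period `p` survives (there is a suffix of `s ++ t`
of length `≥ |w| + p` with period `p`), then period `q` does not survive these `p` letters:
there is no suffix of `s ++ t` of length `≥ |z| + p` with period `q`. -/
theorem smaller_period_dies {α : Type*} (s t u v w z : List α) (r p q : ℕ)
    (hr : 1 ≤ r) (hw : w = listPow (u ++ v) r ++ u) (hwpal : w.reverse = w)
    (hp : p = (u ++ v).length) (hmin : minPeriod w = p) (hws : w <:+ s)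
    (hz : z <:+ s) (hzpal : z.reverse = z) (hzne : z ≠ []) (hq : minPeriod z = q)
    (hqp : q < p) (ht : t.length = p)
    (hsurv : ∃ y : List α, y <:+ s ++ t ∧ w.length + p ≤ y.length ∧ HasPeriod y p) :
    ¬ ∃ y : List α, y <:+ s ++ t ∧ z.length + p ≤ y.length ∧ HasPeriod y q :=
  smaller_period_dies_general s t w z p q hmin hws hzne hq hqp ht hsurv
end

section
/- If f_1(i) = pl^{(i-1) mod 2}(s[0..i]) and f_2(i) = pl^{i mod 2}(s[0..i]) and f_j has a 'drop' at position i, meaning f_j(i) = f_{3-j}(i-2) + 1 ≤ f_j(i-1) - 3, then neither f_1 nor f_2 has a drop at position i+1. -/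
/-- `f₁(i) = pl^{(i-1) mod 2}(s[0..i])`. -/
noncomputable def palF1 {α : Type*} (s : List α) (i : ℕ) : ℕ∞ :=
  plParity ((i + 1) % 2) (s.take (i + 1))

/-- `f₂(i) = pl^{i mod 2}(s[0..i])`. -/
noncomputable def palF2 {α : Type*} (s : List α) (i : ℕ) : ℕ∞ :=
  plParity (i % 2) (s.take (i + 1))

/-!
Appending a letter raises `plParity` by at most one. Conversely, the last factor of an optimal
factorization of `w a b` is `b`, `a b` or `b u b` with `u` a palindrome; removing the final `b`
from it shows that `f_j` can fall by more than one from `i - 1` to `i` only to a value at least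
`f_{3-j}(i - 1)`. Feeding a drop at `i` and one at `i + 1` into these inequalities gives
`x + 3 ≤ x + 1` for `x = f_j(i + 1)`, which is finite: `f₁` counts factorizations of the
parity of the length (e.g. into letters), and a drop of `f₂` at `i + 1` makes it `f₁(i - 1) + 1`.
-/

section PalFact

variable {α : Type*} {u v w : List α} {k l : ℕ}

theorem HasPalFact.append (hu : HasPalFact u k) (hv : HasPalFact v l) :
    HasPalFact (u ++ v) (k + l) := by
  obtain ⟨L, rfl, rfl, hL⟩ := hu
  obtain ⟨M, rfl, rfl, hM⟩ := hv
  exact ⟨L ++ M, List.length_append, List.flatten_append,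
    fun x hx => (List.mem_append.1 hx).elim (hL x) (hM x)⟩

theorem hasPalFact_one (hw : w ≠ []) (hpal : w.reverse = w) : HasPalFact w 1 :=
  ⟨[w], rfl, by simp, by simpa using ⟨hw, hpal⟩⟩

theorem hasPalFact_length : ∀ w : List α, HasPalFact w w.length
  | [] => ⟨[], rfl, rfl, by simp⟩
  | a :: w => by
    simpa [add_comm] using (hasPalFact_one (w := [a]) (by simp) rfl).append (hasPalFact_length w)

theorem HasPalFact.pos (h : HasPalFact u k) (hu : u ≠ []) : 0 < k := by
  obtain ⟨L, rfl, rfl, -⟩ := h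
  exact List.length_pos_iff.2 (by rintro rfl; exact hu rfl)

theorem HasPalFact.exists_append (h : HasPalFact u (k + 1)) :
    ∃ v P, u = v ++ P ∧ HasPalFact v k ∧ P ≠ [] ∧ P.Palindrome := by
  obtain ⟨L, hL, rfl, hpal⟩ := h
  obtain ⟨L', P, rfl⟩ := (List.eq_nil_or_concat' L).resolve_left (by rintro rfl; simp at hL)
  obtain ⟨hP, hPpal⟩ := hpal P (by simp)
  exact ⟨L'.flatten, P, by simp, ⟨L', by simpa using hL, rfl, fun x hx => hpal x (by simp [hx])⟩,
    hP, List.Palindrome.iff_reverse_eq.2 hPpal⟩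

/-- The last factor is `b`, `a b` (then `a = b`) or `b u b`; in the last case `b u` is refactored
as `b`, `u`. -/
theorem HasPalFact.of_append_pair {a b : α} (h : HasPalFact (w ++ [a, b]) (k + 1)) :
    HasPalFact (w ++ [a]) k ∨ HasPalFact (w ++ [a]) (k + 2) ∨ HasPalFact w k := by
  obtain ⟨v, P, huv, hv, hP, hpal⟩ := h.exists_append
  rw [show w ++ [a, b] = w ++ [a] ++ [b] by simp] at huv
  cases hpal with
  | nil => exact absurd rfl hP
  | singleton x =>
    obtain ⟨rfl, -⟩ := List.append_inj' huv rfl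
    exact Or.inl hv
  | @cons_concat x N hN =>
    rw [← List.cons_append, ← List.append_assoc] at huv
    obtain ⟨hwa, hbx⟩ := List.append_inj' huv rfl
    obtain rfl := List.singleton_inj.1 hbx
    rcases N with _ | ⟨c, N⟩
    · obtain ⟨rfl, -⟩ := List.append_inj' hwa rfl
      exact Or.inr (Or.inr hv)
    · rw [hwa, show v ++ b :: c :: N = v ++ [b] ++ c :: N by simp]
      exact Or.inr (Or.inl ((hv.append (hasPalFact_one (by simp) rfl)).append
        (hasPalFact_one (by simp) hN.reverse_eq)))

end PalFact

section PlParity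

variable {α : Type*} {u : List α} {j k p q : ℕ}

theorem plParity_le (h : HasPalFact u k) (hk : k % 2 = j) : plParity j u ≤ k :=
  sInf_le ⟨k, rfl, hk, h⟩

theorem plParity_length_ne_top (u : List α) : plParity (u.length % 2) u ≠ ⊤ :=
  ne_top_of_le_ne_top (ENat.natCast_ne_top _) (plParity_le (hasPalFact_length u) rfl)

theorem exists_hasPalFact_of_plParity_ne_top (h : plParity j u ≠ ⊤) :
    ∃ k : ℕ, plParity j u = k ∧ k % 2 = j ∧ HasPalFact u k := by
  have hne : {n : ℕ∞ | ∃ k : ℕ, n = k ∧ k % 2 = j ∧ HasPalFact u k}.Nonempty :=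
    Set.nonempty_iff_ne_empty.2 fun he => h (by rw [plParity, he, sInf_empty])
  exact csInf_mem hne

theorem plParity_append_singleton_le (hqp : (q + 1) % 2 = p) (w : List α) (b : α) :
    plParity p (w ++ [b]) ≤ plParity q w + 1 := by
  rcases eq_or_ne (plParity q w) ⊤ with h | h
  · simp [h]
  obtain ⟨k, hk, rfl, hw⟩ := exists_hasPalFact_of_plParity_ne_top h
  rw [hk]
  exact_mod_cast plParity_le (hw.append (hasPalFact_one (w := [b]) (by simp) rfl)) (by omega)

theorem plParity_append_pair_cases (hpq : (p + 1) % 2 = q) (hqp : (q + 1) % 2 = p)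
    (w : List α) (a b : α) :
    plParity q (w ++ [a]) ≤ plParity p (w ++ [a, b]) + 1 ∨
      plParity p (w ++ [a]) ≤ plParity p (w ++ [a, b]) := by
  rcases eq_or_ne (plParity p (w ++ [a, b])) ⊤ with h | h
  · simp [h]
  obtain ⟨k, hk, hkp, hwab⟩ := exists_hasPalFact_of_plParity_ne_top h
  obtain ⟨k, rfl⟩ := Nat.exists_eq_add_one_of_ne_zero (hwab.pos (by simp)).ne'
  rw [hk]
  rcases hwab.of_append_pair with hwa | hwa | hw
  · left
    calc plParity q (w ++ [a]) ≤ k := plParity_le hwa (by omega)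
      _ ≤ ↑(k + 1) + 1 := by norm_cast; omega
  · left
    exact_mod_cast plParity_le hwa (by omega)
  · right
    exact_mod_cast plParity_le (hw.append (hasPalFact_one (w := [a]) (by simp) rfl)) (by omega)

end PlParity

section Prefix

variable {α : Type*} (s : List α) {m : ℕ}

theorem palF1_ne_top (h : m < s.length) : palF1 s m ≠ ⊤ := by
  have := plParity_length_ne_top (s.take (m + 1))
  rwa [List.length_take, min_eq_left (by omega)] at this

theorem palF1_succ_le (h : m + 2 ≤ s.length) : palF1 s (m + 1) ≤ palF1 s m + 1 := by
  unfold palF1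
  rw [List.take_succ_eq_append_getElem (i := m + 1) (by omega)]
  exact plParity_append_singleton_le (by omega) _ _

theorem palF2_succ_le (h : m + 2 ≤ s.length) : palF2 s (m + 1) ≤ palF2 s m + 1 := by
  unfold palF2
  rw [List.take_succ_eq_append_getElem (i := m + 1) (by omega)]
  exact plParity_append_singleton_le (by omega) _ _

theorem take_add_two_eq (h : m + 2 ≤ s.length) :
    s.take (m + 1 + 1) = s.take m ++ [s[m], s[m + 1]] := by
  rw [List.take_succ_eq_append_getElem (i := m + 1) (by omega),
    List.take_succ_eq_append_getElem (i := m) (by omega), List.append_assoc]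
  rfl

theorem palF1_le_or_palF2_le (h : m + 2 ≤ s.length) :
    palF1 s m ≤ palF1 s (m + 1) + 1 ∨ palF2 s m ≤ palF1 s (m + 1) := by
  unfold palF1 palF2
  rw [take_add_two_eq s h, List.take_succ_eq_append_getElem (i := m) (by omega),
    show (m + 1 + 1) % 2 = m % 2 by omega]
  exact plParity_append_pair_cases (by omega) (by omega) _ _ _

theorem palF2_le_or_palF1_le (h : m + 2 ≤ s.length) :
    palF2 s m ≤ palF2 s (m + 1) + 1 ∨ palF1 s m ≤ palF2 s (m + 1) := by
  unfold palF1 palF2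
  rw [take_add_two_eq s h, List.take_succ_eq_append_getElem (i := m) (by omega)]
  exact plParity_append_pair_cases (by omega) (by omega) _ _ _

end Prefix

def HasDrop (f g : ℕ → ℕ∞) (i : ℕ) : Prop :=
  f i = g (i - 2) + 1 ∧ f i + 3 ≤ f (i - 1)

theorem not_hasDrop_succ_of_hasDrop {f g : ℕ → ℕ∞} {t : ℕ}
    (hf₀ : f (t + 1) ≤ f t + 1) (hf₁ : f (t + 2) ≤ f (t + 1) + 1)
    (hg : g t ≤ g (t + 1) + 1 ∨ f t ≤ g (t + 1)) (hfin : f (t + 3) ≠ ⊤)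
    (hdrop : HasDrop f g (t + 2) ∨ HasDrop g f (t + 2)) : ¬HasDrop f g (t + 3) := by
  rintro ⟨hx : f (t + 3) = g (t + 1) + 1, hx' : f (t + 3) + 3 ≤ f (t + 2)⟩
  suffices f (t + 3) + 3 ≤ f (t + 3) + 1 from
    absurd ((ENat.add_le_add_iff_left hfin).1 this) (by norm_num)
  rcases hdrop with ⟨hd : f (t + 2) = g t + 1, hd' : f (t + 2) + 3 ≤ f (t + 1)⟩ |
    ⟨hd : g (t + 2) = f t + 1, hd' : g (t + 2) + 3 ≤ g (t + 1)⟩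
  · rcases hg with hg | hg
    · calc f (t + 3) + 3 ≤ f (t + 2) := hx'
        _ = g t + 1 := hd
        _ ≤ g (t + 1) + 1 + 1 := by gcongr
        _ = f (t + 3) + 1 := by rw [hx]
    · calc f (t + 3) + 3 ≤ f (t + 3) + 3 + 3 := le_self_add
        _ ≤ f (t + 2) + 3 := by gcongr
        _ ≤ f (t + 1) := hd'
        _ ≤ f t + 1 := hf₀
        _ ≤ g (t + 1) + 1 := by gcongr
        _ = f (t + 3) := hx.symm
        _ ≤ f (t + 3) + 1 := le_self_add
  · calc f (t + 3) + 3 ≤ f (t + 2) := hx'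
      _ ≤ f (t + 1) + 1 := hf₁
      _ ≤ f t + 1 + 1 := by gcongr
      _ = g (t + 2) + 1 := by rw [hd]
      _ ≤ g (t + 1) + 1 := by gcongr; exact le_self_add.trans hd'
      _ = f (t + 3) := hx.symm
      _ ≤ f (t + 3) + 1 := le_self_add

/-- if `f_j` has a drop at position `i`
(`f_j(i) = f_{3-j}(i-2) + 1 ≤ f_j(i-1) - 3`), then neither `f₁` nor `f₂` has a drop at
position `i + 1`. -/
theorem no_consecutive_drops {α : Type*} (s : List α) (i : ℕ) (hi : 2 ≤ i)
    (hlen : i + 2 ≤ s.length)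
    (hdrop : (palF1 s i = palF2 s (i - 2) + 1 ∧ palF1 s i + 3 ≤ palF1 s (i - 1)) ∨
             (palF2 s i = palF1 s (i - 2) + 1 ∧ palF2 s i + 3 ≤ palF2 s (i - 1))) :
    ¬(palF1 s (i + 1) = palF2 s (i - 1) + 1 ∧ palF1 s (i + 1) + 3 ≤ palF1 s i) ∧
    ¬(palF2 s (i + 1) = palF1 s (i - 1) + 1 ∧ palF2 s (i + 1) + 3 ≤ palF2 s i) := by
  obtain ⟨t, rfl⟩ : ∃ t, i = t + 2 := ⟨i - 2, by omega⟩
  have hdrop' : HasDrop (palF1 s) (palF2 s) (t + 2) ∨ HasDrop (palF2 s) (palF1 s) (t + 2) := hdrop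
  refine ⟨not_hasDrop_succ_of_hasDrop (palF1_succ_le s (by omega)) (palF1_succ_le s (by omega))
    (palF2_le_or_palF1_le s (by omega)) (palF1_ne_top s (by omega)) hdrop', fun hdrop₂ => ?_⟩
  have hfin : palF2 s (t + 3) ≠ ⊤ := by
    rw [hdrop₂.1]
    exact WithTop.add_ne_top.2 ⟨palF1_ne_top s (by omega), WithTop.one_ne_top⟩
  exact not_hasDrop_succ_of_hasDrop (palF2_succ_le s (by omega)) (palF2_succ_le s (by omega))
    (palF1_le_or_palF2_le s (by omega)) hfin hdrop'.symm hdrop₂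
end
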